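/- arXiv:2506.16422 — 4 statements merged into one kernel-verified Lean document; each statement's English description precedes it below -/
import Mathlib

section
/- Let 𝔤 be a finite-dimensional solvable real Lie algebra and h ∈ 𝔤 a non-central Euler element (i.e., ad h is nonzero, diagonalizable with eigenvalues in {−1,0,1}). Then there exists an ideal 𝔫 ⊆ 𝔤 with [𝔤,𝔤] ⊆ 𝔫 such that 𝔤 = 𝔫 ⋊ ℝh, i.e., 𝔫 is a hyperplane ideal not containing h. -/
open LieAlgebra Module LinearMap
open scoped Classical

universe u

/-- In a solvable Lie algebra, an element of the span of brackets whose `ad` cubes to itself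
has `ad = 0`. -/
lemma aux_ad_eq_zero : ∀ (n : ℕ) (L : Type u) [LieRing L] [LieAlgebra ℝ L]
    [FiniteDimensional ℝ L] [LieAlgebra.IsSolvable L] (h : L),
    finrank ℝ L ≤ n →
    (LieAlgebra.ad ℝ L h) ^ 3 = LieAlgebra.ad ℝ L h →
    h ∈ (⁅(⊤ : LieIdeal ℝ L), (⊤ : LieIdeal ℝ L)⁆ : LieIdeal ℝ L) →
    LieAlgebra.ad ℝ L h = 0 := by
  intro n
  induction n with
  | zero =>
    intro L _ _ _ _ h hrank _ _
    have : Subsingleton L := by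
      rw [← Module.finrank_zero_iff (R := ℝ)]
      omega
    ext x
    exact Subsingleton.elim _ _
  | succ n ih =>
    intro L _ _ _ _ h hrank hE hmem
    by_contra hne
    -- L is nontrivial
    have hLnt : Nontrivial L := by
      rcases subsingleton_or_nontrivial L with hs | hs
      · exact absurd (by ext x; exact Subsingleton.elim _ _) hne
      · exact hs
    -- find the last nonzero derived series term A
    obtain ⟨N, hN⟩ := LieAlgebra.IsSolvable.solvable (R := ℝ) (L := L)
    have hex : ∃ k, LieAlgebra.derivedSeries ℝ L k = ⊥ := ⟨N, hN⟩
    set k := Nat.find hex with hk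
    have hkbot : LieAlgebra.derivedSeries ℝ L k = ⊥ := Nat.find_spec hex
    have hk0 : k ≠ 0 := by
      intro h0
      rw [h0] at hkbot
      simp only [LieAlgebra.derivedSeries_def, LieAlgebra.derivedSeriesOfIdeal_zero] at hkbot
      exact absurd hkbot (by simp)
    set A : LieIdeal ℝ L := LieAlgebra.derivedSeries ℝ L (k - 1) with hA
    have hAne : A ≠ ⊥ := Nat.find_min hex (by omega)
    have hAab : ∀ x y : L, x ∈ A → y ∈ A → ⁅x, y⁆ = 0 := by
      intro x y hx hy
      have : ⁅x, y⁆ ∈ (⁅A, A⁆ : LieIdeal ℝ L) := LieSubmodule.lie_mem_lie hx hy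
      have h2 : (⁅A, A⁆ : LieIdeal ℝ L) = ⊥ := by
        have : LieAlgebra.derivedSeries ℝ L (k - 1 + 1) = ⁅A, A⁆ := by
          rw [hA, LieAlgebra.derivedSeries_def, LieAlgebra.derivedSeriesOfIdeal_succ]
        rw [Nat.sub_add_cancel (by omega)] at this
        rw [← this, hkbot]
      rw [h2] at this
      simpa using this
    by_cases hc : ∀ x : L, ⁅h, x⁆ ∈ A
    · -- trace argument
      -- the functional x ↦ trace (ad x * ad h) vanishes on brackets
      have key : ∀ a b : L, (LinearMap.trace ℝ L) (ad ℝ L ⁅a, b⁆ * ad ℝ L h) = 0 := by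
        intro a b
        have h1 : ad ℝ L ⁅a, b⁆ = ad ℝ L a * ad ℝ L b - ad ℝ L b * ad ℝ L a := by
          ext x; simp only [ad_apply, LinearMap.sub_apply, Module.End.mul_apply, lie_lie]
        have h2 : (ad ℝ L ⁅a, b⁆) * ad ℝ L h
            = (ad ℝ L a * ad ℝ L b) * ad ℝ L h - (ad ℝ L b * ad ℝ L a) * ad ℝ L h := by
          rw [h1, sub_mul]
        rw [h2, map_sub]
        have h3 : (LinearMap.trace ℝ L) ((ad ℝ L b * ad ℝ L a) * ad ℝ L h)
            = (LinearMap.trace ℝ L) (ad ℝ L a * (ad ℝ L h * ad ℝ L b)) := by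
          rw [LinearMap.trace_mul_comm, ← mul_assoc, LinearMap.trace_mul_comm]
        rw [h3]
        have h4 : (LinearMap.trace ℝ L) ((ad ℝ L a * ad ℝ L b) * ad ℝ L h)
            = (LinearMap.trace ℝ L) (ad ℝ L a * (ad ℝ L b * ad ℝ L h)) := by
          rw [mul_assoc]
        rw [h4, ← map_sub, ← mul_sub]
        have h5 : ad ℝ L b * ad ℝ L h - ad ℝ L h * ad ℝ L b = ad ℝ L ⁅b, h⁆ := by
          ext x; simp only [ad_apply, LinearMap.sub_apply, Module.End.mul_apply, lie_lie]
        rw [h5]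
        -- now (ad a * ad ⁅b,h⁆)² = 0
        have hbA : (⁅b, h⁆ : L) ∈ A := by
          have := hc b
          have h6 : (⁅b, h⁆ : L) = -⁅h, b⁆ := by rw [← lie_skew]
          rw [h6]; exact neg_mem this
        have hnil : (ad ℝ L a * ad ℝ L ⁅b, h⁆) ^ 2 = 0 := by
          ext x
          have m1 : (⁅(⁅b,h⁆ : L), x⁆ : L) ∈ A := by
            have := A.lie_mem (x := x) hbA
            have h6 : (⁅(⁅b,h⁆ : L), x⁆ : L) = -⁅x, ⁅b,h⁆⁆ := by rw [← lie_skew]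
            rw [h6]; exact neg_mem this
          have m2 : (⁅a, ⁅(⁅b,h⁆ : L), x⁆⁆ : L) ∈ A := A.lie_mem m1
          have m3 : (⁅(⁅b,h⁆ : L), ⁅a, ⁅(⁅b,h⁆ : L), x⁆⁆⁆ : L) = 0 := hAab _ _ hbA m2
          simp only [pow_two, Module.End.mul_apply, ad_apply, LinearMap.zero_apply]
          rw [m3, lie_zero]
        have := LinearMap.isNilpotent_trace_of_isNilpotent ⟨2, hnil⟩
        exact this.eq_zero
      -- hence it vanishes on h
      have hmem' : h ∈ Submodule.span ℝ
          { m : L | ∃ x ∈ (⊤ : LieIdeal ℝ L), ∃ y ∈ (⊤ : LieIdeal ℝ L), ⁅x, y⁆ = m } := by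
        rw [← LieSubmodule.lieIdeal_oper_eq_linear_span']
        exact hmem
      have hvanish : (LinearMap.trace ℝ L) (ad ℝ L h * ad ℝ L h) = 0 := by
        have : ∀ z ∈ Submodule.span ℝ
            { m : L | ∃ x ∈ (⊤ : LieIdeal ℝ L), ∃ y ∈ (⊤ : LieIdeal ℝ L), ⁅x, y⁆ = m },
            (LinearMap.trace ℝ L) (ad ℝ L z * ad ℝ L h) = 0 := by
          intro z hz
          induction hz using Submodule.span_induction with
          | mem m hm => obtain ⟨x, -, y, -, rfl⟩ := hm; exact key x y
          | zero => simp
          | add u v _ _ hu hv => rw [map_add, add_mul, map_add, hu, hv, add_zero]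
          | smul t u _ hu => rw [map_smul, smul_mul_assoc, map_smul, hu, smul_zero]
        exact this h hmem'
      -- but trace ((ad h)²) = finrank of range of the projection (ad h)² > 0
      have hP : (ad ℝ L h * ad ℝ L h) ^ 2 = ad ℝ L h * ad ℝ L h := by
        have h4 : (ad ℝ L h) ^ 4 = (ad ℝ L h) ^ 2 := by
          calc (ad ℝ L h) ^ 4 = (ad ℝ L h) ^ 3 * ad ℝ L h := pow_succ _ 3
          _ = ad ℝ L h * ad ℝ L h := by rw [hE]
          _ = (ad ℝ L h) ^ 2 := (pow_two _).symm
        calc (ad ℝ L h * ad ℝ L h) ^ 2 = ((ad ℝ L h) ^ 2) ^ 2 := by rw [pow_two (ad ℝ L h)]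
        _ = (ad ℝ L h) ^ 4 := by rw [← pow_mul]
        _ = (ad ℝ L h) ^ 2 := h4
        _ = ad ℝ L h * ad ℝ L h := pow_two _
      set P : Module.End ℝ L := ad ℝ L h * ad ℝ L h with hPdef
      have hPproj : LinearMap.IsProj (LinearMap.range (P : L →ₗ[ℝ] L)) (P : L →ₗ[ℝ] L) := by
        constructor
        · intro x; exact LinearMap.mem_range_self _ x
        · rintro x ⟨y, rfl⟩
          have := congrFun (congrArg DFunLike.coe hP) y
          simpa [pow_two] using this
      have htr : (LinearMap.trace ℝ L) (P : L →ₗ[ℝ] L)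
          = (finrank ℝ (LinearMap.range (P : L →ₗ[ℝ] L)) : ℝ) := hPproj.trace
      have hPne : P ≠ 0 := by
        intro h0
        apply hne
        calc ad ℝ L h = (ad ℝ L h) ^ 3 := hE.symm
        _ = ad ℝ L h * P := by rw [hPdef, ← pow_two, ← pow_succ']
        _ = 0 := by rw [h0, mul_zero]
      have hrpos : 0 < finrank ℝ (LinearMap.range (P : L →ₗ[ℝ] L)) := by
        rcases Nat.eq_zero_or_pos (finrank ℝ (LinearMap.range (P : L →ₗ[ℝ] L))) with h0 | h0
        · exfalso
          apply hPne
          have : LinearMap.range (P : L →ₗ[ℝ] L) = ⊥ := Submodule.finrank_eq_zero.mp h0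
          exact LinearMap.range_eq_bot.mp this
        · exact h0
      rw [hvanish] at htr
      have : (0:ℝ) < (finrank ℝ (LinearMap.range (P : L →ₗ[ℝ] L)) : ℝ) := by
        exact_mod_cast hrpos
      rw [← htr] at this
      exact lt_irrefl _ this
    · -- quotient argument
      push_neg at hc
      obtain ⟨x₀, hx₀⟩ := hc
      let Q := L ⧸ A
      let π : L →ₗ⁅ℝ⁆ Q := { A.toSubmodule.mkQ with map_lie' := rfl }
      have hπ : ∀ x : L, π x = LieSubmodule.Quotient.mk (N := A) x := fun _ => rfl
      have hπsurj : Function.Surjective π := Submodule.mkQ_surjective _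
      -- finrank of Q
      have hfr : finrank ℝ Q < finrank ℝ L := by
        have h1 : finrank ℝ Q + finrank ℝ A.toSubmodule = finrank ℝ L :=
          Submodule.finrank_quotient_add_finrank _
        have h2 : 0 < finrank ℝ A.toSubmodule := by
          rcases Nat.eq_zero_or_pos (finrank ℝ A.toSubmodule) with h0 | h0
          · exact absurd (by
              have : A.toSubmodule = ⊥ := Submodule.finrank_eq_zero.mp h0
              rwa [LieSubmodule.toSubmodule_eq_bot] at this) hAne
          · exact h0
        omega
      have hE' : (ad ℝ Q (π h)) ^ 3 = ad ℝ Q (π h) := by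
        ext y
        obtain ⟨x, rfl⟩ := hπsurj y
        have e1 : ∀ z : L, ad ℝ Q (π h) (π z) = π ⁅h, z⁆ := by
          intro z; rw [ad_apply, ← LieHom.map_lie]
        have : (ad ℝ Q (π h)) ((ad ℝ Q (π h)) ((ad ℝ Q (π h)) (π x))) = π ⁅h, ⁅h, ⁅h, x⁆⁆⁆ := by
          rw [e1, e1, e1]
        have hEx : (⁅h, ⁅h, ⁅h, x⁆⁆⁆ : L) = ⁅h, x⁆ := by
          have := congrFun (congrArg DFunLike.coe hE) x
          simpa [pow_succ, pow_two] using this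
        calc ((ad ℝ Q (π h)) ^ 3) (π x) = (ad ℝ Q (π h)) ((ad ℝ Q (π h)) ((ad ℝ Q (π h)) (π x))) := by
              rw [pow_succ, pow_two]; rfl
        _ = π ⁅h, ⁅h, ⁅h, x⁆⁆⁆ := this
        _ = π ⁅h, x⁆ := by rw [hEx]
        _ = (ad ℝ Q (π h)) (π x) := (e1 x).symm
      have hmem'Q : π h ∈ (⁅(⊤ : LieIdeal ℝ Q), (⊤ : LieIdeal ℝ Q)⁆ : LieIdeal ℝ Q) := by
        have hmem' : h ∈ Submodule.span ℝ
            { m : L | ∃ x ∈ (⊤ : LieIdeal ℝ L), ∃ y ∈ (⊤ : LieIdeal ℝ L), ⁅x, y⁆ = m } := by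
          rw [← LieSubmodule.lieIdeal_oper_eq_linear_span']
          exact hmem
        have : ∀ z ∈ Submodule.span ℝ
            { m : L | ∃ x ∈ (⊤ : LieIdeal ℝ L), ∃ y ∈ (⊤ : LieIdeal ℝ L), ⁅x, y⁆ = m },
            π z ∈ (⁅(⊤ : LieIdeal ℝ Q), (⊤ : LieIdeal ℝ Q)⁆ : LieIdeal ℝ Q) := by
          intro z hz
          induction hz using Submodule.span_induction with
          | mem m hm =>
            obtain ⟨x, -, y, -, rfl⟩ := hm
            rw [LieHom.map_lie]
            exact LieSubmodule.lie_mem_lie trivial trivial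
          | zero => rw [map_zero]; exact (⁅(⊤ : LieIdeal ℝ Q), (⊤ : LieIdeal ℝ Q)⁆ : LieIdeal ℝ Q).zero_mem
          | add u v _ _ hu hv => rw [map_add]; exact add_mem hu hv
          | smul t u _ hu => rw [map_smul]; exact Submodule.smul_mem _ _ hu
        exact this h hmem'
      have : LieAlgebra.IsSolvable Q := hπsurj.lieAlgebra_isSolvable (f := π)
      have hzero : ad ℝ Q (π h) = 0 := ih Q (π h) (by omega) hE' hmem'Q
      apply hx₀
      have : ad ℝ Q (π h) (π x₀) = 0 := by rw [hzero]; rfl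
      rw [ad_apply, ← LieHom.map_lie] at this
      have h7 : LieSubmodule.Quotient.mk' A ⁅h, x₀⁆ = 0 := this
      rwa [LieSubmodule.Quotient.mk_eq_zero] at h7



/-- Let `𝔤` be a finite-dimensional solvable real Lie algebra and `h ∈ 𝔤`
a non-central Euler element (i.e. `(ad h)³ = ad h ≠ 0`).  Then there exists an ideal
`𝔫 ⊆ 𝔤` with `[𝔤,𝔤] ⊆ 𝔫`, `h ∉ 𝔫`, and `𝔤 = 𝔫 ⋊ ℝh` (i.e. `𝔫` is a hyperplane ideal
complementary to `ℝh`). -/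
theorem stmt0 {L : Type*} [LieRing L] [LieAlgebra ℝ L] [FiniteDimensional ℝ L]
    [LieAlgebra.IsSolvable L] (h : L)
    (hEuler : (LieAlgebra.ad ℝ L h) ^ 3 = LieAlgebra.ad ℝ L h)
    (hne : LieAlgebra.ad ℝ L h ≠ 0)
    (hnc : h ∉ LieAlgebra.center ℝ L) :
    ∃ n : LieIdeal ℝ L,
      (⁅(⊤ : LieIdeal ℝ L), (⊤ : LieIdeal ℝ L)⁆ : LieIdeal ℝ L) ≤ n ∧
      h ∉ n ∧
      (n : Submodule ℝ L) ⊔ Submodule.span ℝ {h} = ⊤ ∧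
      (n : Submodule ℝ L) ⊓ Submodule.span ℝ {h} = ⊥ := by
  have hW : h ∉ (⁅(⊤ : LieIdeal ℝ L), (⊤ : LieIdeal ℝ L)⁆ : LieIdeal ℝ L) := fun hmem =>
    hne (aux_ad_eq_zero (finrank ℝ L) L h le_rfl hEuler hmem)
  set Wi : LieIdeal ℝ L := ⁅(⊤ : LieIdeal ℝ L), (⊤ : LieIdeal ℝ L)⁆ with hWi
  set W : Submodule ℝ L := Wi.toSubmodule with hWdef
  let q : L →ₗ[ℝ] L ⧸ W := W.mkQ
  have hqh : q h ≠ 0 := by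
    intro h0
    exact hW ((Submodule.Quotient.mk_eq_zero W).mp h0)
  obtain ⟨C, hC⟩ := (Submodule.span ℝ {q h}).exists_isCompl
  set nsub : Submodule ℝ L := C.comap q with hnsub
  have hWn : W ≤ nsub := by
    intro x hx
    have : q x = 0 := (Submodule.Quotient.mk_eq_zero W).mpr hx
    simp only [hnsub, Submodule.mem_comap, this]
    exact C.zero_mem
  refine ⟨{ nsub with lie_mem := fun {x m} _ => hWn (LieSubmodule.lie_mem_lie trivial trivial) },
    ?_, ?_, ?_, ?_⟩
  · intro x hx
    exact hWn hx
  · intro hx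
    have h1 : q h ∈ C := hx
    have h2 : q h ∈ Submodule.span ℝ {q h} := Submodule.mem_span_singleton_self _
    have : q h ∈ Submodule.span ℝ {q h} ⊓ C := ⟨h2, h1⟩
    rw [hC.inf_eq_bot] at this
    exact hqh this
  · rw [eq_top_iff]
    intro x _
    have hx : q x ∈ Submodule.span ℝ {q h} ⊔ C := by rw [hC.sup_eq_top]; trivial
    obtain ⟨s, hs, c, hcC, hsc⟩ := Submodule.mem_sup.mp hx
    obtain ⟨t, rfl⟩ := Submodule.mem_span_singleton.mp hs
    have hxt : x - t • h ∈ nsub := by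
      simp only [hnsub, Submodule.mem_comap, map_sub, map_smul]
      have : q x - t • q h = c := by rw [← hsc]; abel
      rw [this]
      exact hcC
    have : x = (x - t • h) + t • h := by abel
    rw [this]
    exact Submodule.add_mem _ (Submodule.mem_sup_left hxt)
      (Submodule.mem_sup_right (Submodule.smul_mem _ _ (Submodule.mem_span_singleton_self _)))
  · rw [eq_bot_iff]
    rintro x ⟨hx1, hx2⟩
    obtain ⟨t, rfl⟩ := Submodule.mem_span_singleton.mp hx2
    have h1 : q (t • h) ∈ C := hx1
    have h2 : q (t • h) ∈ Submodule.span ℝ {q h} := by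
      rw [map_smul]
      exact Submodule.smul_mem _ _ (Submodule.mem_span_singleton_self _)
    have h3 : q (t • h) ∈ Submodule.span ℝ {q h} ⊓ C := ⟨h2, h1⟩
    rw [hC.inf_eq_bot] at h3
    have h4 : t • q h = 0 := by rw [← map_smul]; exact h3
    rcases smul_eq_zero.mp h4 with h5 | h5
    · simp [h5]
    · exact absurd h5 hqh
end

section
/- Let G be a group with subgroups G₀, G₊, G₋ such that G is generated by G₋ ∪ G₀ ∪ G₊ and G₀ normalizes both G₊ and G₋. For any unitary representation U of G on H, the intersection H^{G₋} ∩ H^{G₊} of the fixed-point subspaces is a closed G-invariant subspace of H. -/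
/-- The fixed-point set of a subgroup under a unitary representation. -/
def fixedSubspace {G H : Type*} [Group G] [NormedAddCommGroup H] [InnerProductSpace ℂ H]
    (U : G →* (H ≃ₗᵢ[ℂ] H)) (K : Subgroup G) : Set H :=
  {v | ∀ k ∈ K, U k v = v}

theorem fixedSubspace_closed {G H : Type*} [Group G] [NormedAddCommGroup H]
    [InnerProductSpace ℂ H] (U : G →* (H ≃ₗᵢ[ℂ] H)) (K : Subgroup G) :
    IsClosed (fixedSubspace U K) := by
  have : fixedSubspace U K = ⋂ k ∈ K, {v : H | U k v = v} := by
    ext v; simp [fixedSubspace, Set.mem_iInter]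
  rw [this]
  exact isClosed_biInter fun k _ => isClosed_eq (U k).continuous continuous_id

/-- Let `G` be a group with subgroups `G₀, G₊, G₋` such that `G` is
generated by `G₋ ∪ G₀ ∪ G₊` and `G₀` normalizes both `G₊` and `G₋`.  For any unitary
representation `U` of `G` on `H`, the intersection `H^{G₋} ∩ H^{G₊}` of the fixed-point
subspaces is a closed `G`-invariant (complex linear) subspace of `H`. -/
theorem stmt3 {G H : Type*} [Group G] [NormedAddCommGroup H] [InnerProductSpace ℂ H]
    [CompleteSpace H] (U : G →* (H ≃ₗᵢ[ℂ] H)) (G₀ Gp Gm : Subgroup G)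
    (hgen : Subgroup.closure ((Gm : Set G) ∪ (G₀ : Set G) ∪ (Gp : Set G)) = ⊤)
    (hnp : G₀ ≤ Subgroup.normalizer (Gp : Set G)) (hnm : G₀ ≤ Subgroup.normalizer (Gm : Set G)) :
    IsClosed (fixedSubspace U Gm ∩ fixedSubspace U Gp) ∧
    (0 : H) ∈ fixedSubspace U Gm ∩ fixedSubspace U Gp ∧
    (∀ v ∈ fixedSubspace U Gm ∩ fixedSubspace U Gp,
      ∀ w ∈ fixedSubspace U Gm ∩ fixedSubspace U Gp,
        v + w ∈ fixedSubspace U Gm ∩ fixedSubspace U Gp) ∧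
    (∀ (c : ℂ), ∀ v ∈ fixedSubspace U Gm ∩ fixedSubspace U Gp,
        c • v ∈ fixedSubspace U Gm ∩ fixedSubspace U Gp) ∧
    (∀ g : G, ∀ v ∈ fixedSubspace U Gm ∩ fixedSubspace U Gp,
        U g v ∈ fixedSubspace U Gm ∩ fixedSubspace U Gp) := by
  set S := fixedSubspace U Gm ∩ fixedSubspace U Gp with hS
  refine ⟨(fixedSubspace_closed U Gm).inter (fixedSubspace_closed U Gp),
    ⟨fun k _ => map_zero _, fun k _ => map_zero _⟩,
    fun v hv w hw => ⟨fun k hk => by rw [map_add, hv.1 k hk, hw.1 k hk],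
      fun k hk => by rw [map_add, hv.2 k hk, hw.2 k hk]⟩,
    fun c v hv => ⟨fun k hk => by rw [map_smul, hv.1 k hk],
      fun k hk => by rw [map_smul, hv.2 k hk]⟩, ?_⟩
  -- invariance
  -- key: elements of G₀ preserve S
  have h0 : ∀ g ∈ G₀, ∀ v ∈ S, U g v ∈ S := by
    intro g hg v hv
    constructor
    · intro k hk
      have hk' : g⁻¹ * k * g ∈ Gm := by
        have := (Subgroup.mem_normalizer_iff.mp (hnm hg) (g⁻¹ * k * g)).mpr
        have h2 : g * (g⁻¹ * k * g) * g⁻¹ = k := by group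
        have := (Subgroup.mem_normalizer_iff.mp (hnm (G₀.inv_mem hg)) k).mp
        simpa [mul_assoc] using this hk
      have hkg : k * g = g * (g⁻¹ * k * g) := by group
      calc U k (U g v) = U (k * g) v := by rw [map_mul]; rfl
        _ = U g (U (g⁻¹ * k * g) v) := by rw [hkg, map_mul]; rfl
        _ = U g v := by rw [hv.1 _ hk']
    · intro k hk
      have hk' : g⁻¹ * k * g ∈ Gp := by
        have := (Subgroup.mem_normalizer_iff.mp (hnp (G₀.inv_mem hg)) k).mp
        simpa [mul_assoc] using this hk
      have hkg : k * g = g * (g⁻¹ * k * g) := by group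
      calc U k (U g v) = U (k * g) v := by rw [map_mul]; rfl
        _ = U g (U (g⁻¹ * k * g) v) := by rw [hkg, map_mul]; rfl
        _ = U g v := by rw [hv.2 _ hk']
  -- fixed elements preserve S trivially
  have hfix : ∀ g, (g ∈ Gm ∨ g ∈ Gp) → ∀ v ∈ S, U g v ∈ S := by
    rintro g (hg | hg) v hv
    · rw [hv.1 g hg]; exact hv
    · rw [hv.2 g hg]; exact hv
  -- closure induction with the symmetrized predicate
  intro g
  have hg : g ∈ Subgroup.closure ((Gm : Set G) ∪ (G₀ : Set G) ∪ (Gp : Set G)) := by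
    rw [hgen]; trivial
  have key : (∀ v ∈ S, U g v ∈ S) ∧ (∀ v ∈ S, U g⁻¹ v ∈ S) := by
    induction hg using Subgroup.closure_induction with
    | mem x hx =>
      rcases hx with (hx | hx) | hx
      · exact ⟨hfix x (Or.inl hx) , hfix x⁻¹ (Or.inl (Gm.inv_mem hx))⟩
      · exact ⟨h0 x hx, h0 x⁻¹ (G₀.inv_mem hx)⟩
      · exact ⟨hfix x (Or.inr hx), hfix x⁻¹ (Or.inr (Gp.inv_mem hx))⟩
    | one => constructor <;> intro v hv <;> simpa using hv
    | mul a b _ _ ha hb =>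
      refine ⟨fun v hv => ?_, fun v hv => ?_⟩
      · rw [map_mul]; exact ha.1 _ (hb.1 v hv)
      · rw [mul_inv_rev, map_mul]; exact hb.2 _ (ha.2 v hv)
    | inv a _ ha => exact ⟨ha.2, by simpa using ha.1⟩
  exact key.1
end

section
/- In the split oscillator Lie algebra 𝔤 = heis(ℝ²) ⋊ ℝh (with basis p, q, z, h satisfying [q,p] = z, [h,q] = q, [h,p] = −p, [h,z] = 0), the set of Euler elements of 𝔤 is exactly the disjoint union of the two affine hyperplanes h + heis(ℝ²) and −h + heis(ℝ²). -/
open Matrix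

/-- The split oscillator Lie algebra, realized inside `sl₃(ℝ)` (matrices with the
commutator bracket): basis `h, q, p, z` with `[q,p] = z`, `[h,q] = q`, `[h,p] = -p`,
`[h,z] = 0`. -/
noncomputable def oscH : Matrix (Fin 3) (Fin 3) ℝ := (1/3 : ℝ) • !![1,0,0; 0,-2,0; 0,0,1]
def oscQ : Matrix (Fin 3) (Fin 3) ℝ := !![0,1,0; 0,0,0; 0,0,0]
def oscP : Matrix (Fin 3) (Fin 3) ℝ := !![0,0,0; 0,0,1; 0,0,0]
def oscZ : Matrix (Fin 3) (Fin 3) ℝ := !![0,0,1; 0,0,0; 0,0,0]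

/-- The split oscillator Lie algebra `𝔤 = heis(ℝ²) ⋊ ℝh`, as a subspace of matrices. -/
noncomputable def osc : Submodule ℝ (Matrix (Fin 3) (Fin 3) ℝ) :=
  Submodule.span ℝ {oscH, oscQ, oscP, oscZ}

/-- The Heisenberg subalgebra `heis(ℝ²) = span(z,q,p) = [𝔤,𝔤]`. -/
def oscHeis : Submodule ℝ (Matrix (Fin 3) (Fin 3) ℝ) :=
  Submodule.span ℝ {oscZ, oscQ, oscP}

/-- `x` is an Euler element of the split oscillator Lie algebra `𝔤`:
`x ∈ 𝔤`, `(ad x)³ = ad x` on `𝔤`, and `ad x ≠ 0` on `𝔤`. -/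
noncomputable def IsOscEuler (x : Matrix (Fin 3) (Fin 3) ℝ) : Prop :=
  x ∈ osc ∧ (∀ y ∈ osc, ⁅x, ⁅x, ⁅x, y⁆⁆⁆ = ⁅x, y⁆) ∧ ∃ y ∈ osc, ⁅x, y⁆ ≠ 0

def oscSub : Submodule ℝ (Matrix (Fin 3) (Fin 3) ℝ) where
  carrier := {x | x 1 0 = 0 ∧ x 2 0 = 0 ∧ x 2 1 = 0 ∧ x 1 1 = -2 * x 0 0 ∧ x 2 2 = x 0 0}
  add_mem' := by
    rintro a b ⟨a1,a2,a3,a4,a5⟩ ⟨b1,b2,b3,b4,b5⟩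
    refine ⟨?_,?_,?_,?_,?_⟩ <;> simp [Matrix.add_apply, a1,a2,a3,a4,a5,b1,b2,b3,b4,b5] <;> ring
  zero_mem' := by simp
  smul_mem' := by
    rintro c a ⟨a1,a2,a3,a4,a5⟩
    refine ⟨?_,?_,?_,?_,?_⟩ <;> simp [Matrix.smul_apply, a1,a2,a3,a4,a5] <;> ring

theorem osc_eq : osc = oscSub := by
  apply le_antisymm
  · rw [osc, Submodule.span_le]
    rintro x (rfl|rfl|rfl|rfl) <;>
      refine ⟨?_,?_,?_,?_,?_⟩ <;> norm_num [oscH, oscQ, oscP, oscZ, oscSub, Matrix.vecHead, Matrix.vecTail, Matrix.cons_val_two]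
  · rintro x ⟨h1,h2,h3,h4,h5⟩
    have hx : x = (3 * x 0 0) • oscH + (x 0 1 • oscQ + (x 1 2 • oscP + x 0 2 • oscZ)) := by
      ext i j
      fin_cases i <;> fin_cases j <;>
        simp [oscH, oscQ, oscP, oscZ, Matrix.vecHead, Matrix.vecTail, h1, h2, h3, h4, h5] <;> ring
    rw [hx]
    refine Submodule.add_mem _ (Submodule.smul_mem _ _ (Submodule.subset_span (by simp)))
      (Submodule.add_mem _ (Submodule.smul_mem _ _ (Submodule.subset_span (by simp)))
        (Submodule.add_mem _ (Submodule.smul_mem _ _ (Submodule.subset_span (by simp)))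
          (Submodule.smul_mem _ _ (Submodule.subset_span (by simp)))))

def heisSub : Submodule ℝ (Matrix (Fin 3) (Fin 3) ℝ) where
  carrier := {x | x 0 0 = 0 ∧ x 1 0 = 0 ∧ x 1 1 = 0 ∧ x 2 0 = 0 ∧ x 2 1 = 0 ∧ x 2 2 = 0}
  add_mem' := by
    rintro a b ⟨a1,a2,a3,a4,a5,a6⟩ ⟨b1,b2,b3,b4,b5,b6⟩
    refine ⟨?_,?_,?_,?_,?_,?_⟩ <;> simp [Matrix.add_apply, *]
  zero_mem' := by simp
  smul_mem' := by
    rintro c a ⟨a1,a2,a3,a4,a5,a6⟩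
    refine ⟨?_,?_,?_,?_,?_,?_⟩ <;> simp [Matrix.smul_apply, *]

theorem heis_eq : oscHeis = heisSub := by
  apply le_antisymm
  · rw [oscHeis, Submodule.span_le]
    rintro x (rfl|rfl|rfl) <;>
      refine ⟨?_,?_,?_,?_,?_,?_⟩ <;> norm_num [oscQ, oscP, oscZ, heisSub, Matrix.vecHead, Matrix.vecTail, Matrix.cons_val_two]
  · rintro x ⟨h1,h2,h3,h4,h5,h6⟩
    have hx : x = x 0 1 • oscQ + (x 1 2 • oscP + x 0 2 • oscZ) := by
      ext i j
      fin_cases i <;> fin_cases j <;> simp [oscQ, oscP, oscZ, Matrix.vecHead, Matrix.vecTail, h1, h2, h3, h4, h5, h6]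
    rw [hx]
    refine Submodule.add_mem _ (Submodule.smul_mem _ _ (Submodule.subset_span (by simp)))
      (Submodule.add_mem _ (Submodule.smul_mem _ _ (Submodule.subset_span (by simp)))
        (Submodule.smul_mem _ _ (Submodule.subset_span (by simp))))

lemma heis_le_osc : oscHeis ≤ osc := by
  apply Submodule.span_mono
  intro u hu
  simp only [Set.mem_insert_iff, Set.mem_singleton_iff] at hu ⊢
  tauto

lemma lie_ex (a b c d e f g h i j k l m n o p q r : ℝ) :
    ⁅(!![a,b,c;d,e,f;g,h,i] : Matrix (Fin 3) (Fin 3) ℝ), !![j,k,l;m,n,o;p,q,r]⁆ =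
    !![a*j+b*m+c*p-(j*a+k*d+l*g), a*k+b*n+c*q-(j*b+k*e+l*h), a*l+b*o+c*r-(j*c+k*f+l*i);
       d*j+e*m+f*p-(m*a+n*d+o*g), d*k+e*n+f*q-(m*b+n*e+o*h), d*l+e*o+f*r-(m*c+n*f+o*i);
       g*j+h*m+i*p-(p*a+q*d+r*g), g*k+h*n+i*q-(p*b+q*e+r*h), g*l+h*o+i*r-(p*c+q*f+r*i)] := by
  rw [Ring.lie_def, Matrix.mul_fin_three, Matrix.mul_fin_three]
  ext i' j'
  fin_cases i' <;> fin_cases j' <;>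
    simp [Matrix.sub_apply, Matrix.vecHead, Matrix.vecTail]

lemma osc_form {y : Matrix (Fin 3) (Fin 3) ℝ} (hy : y ∈ osc) :
    ∃ s e f g, y = !![s,e,f;0,-2*s,g;0,0,s] := by
  rw [osc_eq] at hy
  obtain ⟨h1,h2,h3,h4,h5⟩ := hy
  exact ⟨y 0 0, y 0 1, y 0 2, y 1 2, by
    ext i j; fin_cases i <;> fin_cases j <;> simp [Matrix.vecHead, Matrix.vecTail, h1,h2,h3,h4,h5]⟩

lemma heis_form {w : Matrix (Fin 3) (Fin 3) ℝ} (hw : w ∈ oscHeis) :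
    ∃ b c d, w = !![0,b,d;0,0,c;0,0,0] := by
  rw [heis_eq] at hw
  obtain ⟨h1,h2,h3,h4,h5,h6⟩ := hw
  exact ⟨w 0 1, w 1 2, w 0 2, by
    ext i j; fin_cases i <;> fin_cases j <;> simp [Matrix.vecHead, Matrix.vecTail, h1,h2,h3,h4,h5,h6]⟩

lemma heis_mem_ex (b c d : ℝ) : (!![0,b,d;0,0,c;0,0,0] : Matrix (Fin 3) (Fin 3) ℝ) ∈ oscHeis := by
  rw [heis_eq]
  refine ⟨?_,?_,?_,?_,?_,?_⟩ <;> norm_num [heisSub, Matrix.vecHead, Matrix.vecTail, Matrix.cons_val_two]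

set_option maxHeartbeats 1000000 in
lemma keyLie (t b c d s e f g : ℝ) (ht : t = 1/3 ∨ t = -(1/3)) :
    ⁅(!![t,b,d;0,-2*t,c;0,0,t] : Matrix (Fin 3) (Fin 3) ℝ),
      ⁅!![t,b,d;0,-2*t,c;0,0,t], ⁅!![t,b,d;0,-2*t,c;0,0,t], !![s,e,f;0,-2*s,g;0,0,s]⁆⁆⁆ =
    ⁅(!![t,b,d;0,-2*t,c;0,0,t] : Matrix (Fin 3) (Fin 3) ℝ), !![s,e,f;0,-2*s,g;0,0,s]⁆ := by
  rcases ht with rfl | rfl <;>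
    · rw [lie_ex, lie_ex, lie_ex]
      ext i j
      fin_cases i <;> fin_cases j <;> simp [Matrix.vecHead, Matrix.vecTail] <;> ring

/-- In the split oscillator Lie algebra `𝔤 = heis(ℝ²) ⋊ ℝh`, the set of
Euler elements is exactly the disjoint union of the two affine hyperplanes
`h + heis(ℝ²)` and `−h + heis(ℝ²)`. -/
theorem stmt4 :
    {x : Matrix (Fin 3) (Fin 3) ℝ | IsOscEuler x} =
      {x | ∃ w ∈ oscHeis, x = oscH + w} ∪ {x | ∃ w ∈ oscHeis, x = -oscH + w} ∧
    Disjoint {x : Matrix (Fin 3) (Fin 3) ℝ | ∃ w ∈ oscHeis, x = oscH + w}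
      {x | ∃ w ∈ oscHeis, x = -oscH + w} := by
  constructor
  · ext x
    simp only [Set.mem_setOf_eq, Set.mem_union]
    constructor
    · rintro ⟨hx, heq, y, hy, hne⟩
      obtain ⟨t, b, c, d, rfl⟩ : ∃ t b c d, x = !![t,b,d;0,-2*t,c;0,0,t] := by
        obtain ⟨s, e, f, g, h⟩ := osc_form hx
        exact ⟨s, e, g, f, h⟩
      clear hx
      have hQ := heq oscQ (Submodule.subset_span (by simp))
      rw [oscQ] at hQ
      rw [lie_ex, lie_ex, lie_ex] at hQ
      have e1 := Matrix.ext_iff.2 hQ 0 1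
      have e2 := Matrix.ext_iff.2 hQ 0 2
      simp [Matrix.vecHead, Matrix.vecTail] at e1 e2
      have h9 : t * ((3*t - 1) * (3*t + 1)) = 0 := by linear_combination e1/3
      rcases mul_eq_zero.1 h9 with ht | h9'
      · -- t = 0 : contradiction with ad x ≠ 0
        exfalso
        subst ht
        have hc : c = 0 := by linear_combination e2
        have hP := heq oscP (Submodule.subset_span (by simp))
        rw [oscP] at hP
        rw [lie_ex, lie_ex, lie_ex] at hP
        have e3 := Matrix.ext_iff.2 hP 0 2
        simp [Matrix.vecHead, Matrix.vecTail] at e3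
        have hb : b = 0 := by linear_combination -e3
        subst hb; subst hc
        apply hne
        obtain ⟨s, e, f, g, rfl⟩ := osc_form hy
        rw [lie_ex]
        ext i j
        fin_cases i <;> fin_cases j <;>
          simp [Matrix.vecHead, Matrix.vecTail] <;> ring
      · rcases mul_eq_zero.1 h9' with h1 | h1
        · have ht : t = 1/3 := by linarith
          subst ht
          exact Or.inl ⟨!![0,b,d;0,0,c;0,0,0], heis_mem_ex b c d, by
            ext i j
            fin_cases i <;> fin_cases j <;>
              norm_num [oscH, Matrix.vecHead, Matrix.vecTail]⟩
        · have ht : t = -(1/3) := by linarith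
          subst ht
          exact Or.inr ⟨!![0,b,d;0,0,c;0,0,0], heis_mem_ex b c d, by
            ext i j
            fin_cases i <;> fin_cases j <;>
              norm_num [oscH, Matrix.vecHead, Matrix.vecTail]⟩
    · rintro (⟨w, hw, rfl⟩ | ⟨w, hw, rfl⟩)
      · obtain ⟨b, c, d, rfl⟩ := heis_form hw
        have hx : oscH + (!![0,b,d;0,0,c;0,0,0] : Matrix (Fin 3) (Fin 3) ℝ) =
            !![(1:ℝ)/3,b,d;0,-2*(1/3),c;0,0,1/3] := by
          ext i j
          fin_cases i <;> fin_cases j <;>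
            norm_num [oscH, Matrix.vecHead, Matrix.vecTail]
        refine ⟨Submodule.add_mem _ (Submodule.subset_span (by simp)) (heis_le_osc hw), ?_, ?_⟩
        · intro y hy
          obtain ⟨s, e, f, g, rfl⟩ := osc_form hy
          rw [hx]
          exact keyLie (1/3) b c d s e f g (Or.inl rfl)
        · refine ⟨oscQ, Submodule.subset_span (by simp), fun hcon => ?_⟩
          rw [hx, oscQ, lie_ex] at hcon
          have := Matrix.ext_iff.2 hcon 0 1
          norm_num [Matrix.vecHead, Matrix.vecTail] at this
      · obtain ⟨b, c, d, rfl⟩ := heis_form hw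
        have hx : -oscH + (!![0,b,d;0,0,c;0,0,0] : Matrix (Fin 3) (Fin 3) ℝ) =
            !![-((1:ℝ)/3),b,d;0,-2*(-(1/3)),c;0,0,-(1/3)] := by
          ext i j
          fin_cases i <;> fin_cases j <;>
            norm_num [oscH, Matrix.vecHead, Matrix.vecTail]
        refine ⟨Submodule.add_mem _ (Submodule.neg_mem _ (Submodule.subset_span (by simp)))
          (heis_le_osc hw), ?_, ?_⟩
        · intro y hy
          obtain ⟨s, e, f, g, rfl⟩ := osc_form hy
          rw [hx]
          exact keyLie (-(1/3)) b c d s e f g (Or.inr rfl)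
        · refine ⟨oscQ, Submodule.subset_span (by simp), fun hcon => ?_⟩
          rw [hx, oscQ, lie_ex] at hcon
          have := Matrix.ext_iff.2 hcon 0 1
          norm_num [Matrix.vecHead, Matrix.vecTail] at this
  · rw [Set.disjoint_left]
    rintro x ⟨w, hw, rfl⟩ ⟨w', hw', he⟩
    rw [heis_eq] at hw hw'
    have := Matrix.ext_iff.2 he 0 0
    norm_num [Matrix.add_apply, Matrix.neg_apply, oscH, hw.1, hw'.1,
      Matrix.vecHead, Matrix.vecTail] at this
end

section
/- Every element of the form ±h + w with w ∈ heis(ℝ²) is an Euler element of the split oscillator Lie algebra 𝔤 = heis(ℝ²) ⋊ ℝh. -/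
open Matrix

private lemma sub_fin_three' (a₁₁ a₁₂ a₁₃ a₂₁ a₂₂ a₂₃ a₃₁ a₃₂ a₃₃
    b₁₁ b₁₂ b₁₃ b₂₁ b₂₂ b₂₃ b₃₁ b₃₂ b₃₃ : ℝ) :
    !![a₁₁,a₁₂,a₁₃; a₂₁,a₂₂,a₂₃; a₃₁,a₃₂,a₃₃] - !![b₁₁,b₁₂,b₁₃; b₂₁,b₂₂,b₂₃; b₃₁,b₃₂,b₃₃] =
    !![a₁₁-b₁₁,a₁₂-b₁₂,a₁₃-b₁₃; a₂₁-b₂₁,a₂₂-b₂₂,a₂₃-b₂₃; a₃₁-b₃₁,a₃₂-b₃₂,a₃₃-b₃₃] := by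
  ext i j; fin_cases i <;> fin_cases j <;> simp

private lemma lie_fin_three (a₁₁ a₁₂ a₁₃ a₂₁ a₂₂ a₂₃ a₃₁ a₃₂ a₃₃
    b₁₁ b₁₂ b₁₃ b₂₁ b₂₂ b₂₃ b₃₁ b₃₂ b₃₃ : ℝ) :
    ⁅(!![a₁₁,a₁₂,a₁₃; a₂₁,a₂₂,a₂₃; a₃₁,a₃₂,a₃₃] : Matrix (Fin 3) (Fin 3) ℝ),
      !![b₁₁,b₁₂,b₁₃; b₂₁,b₂₂,b₂₃; b₃₁,b₃₂,b₃₃]⁆ =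
    !![(a₁₁*b₁₁+a₁₂*b₂₁+a₁₃*b₃₁)-(b₁₁*a₁₁+b₁₂*a₂₁+b₁₃*a₃₁),
       (a₁₁*b₁₂+a₁₂*b₂₂+a₁₃*b₃₂)-(b₁₁*a₁₂+b₁₂*a₂₂+b₁₃*a₃₂),
       (a₁₁*b₁₃+a₁₂*b₂₃+a₁₃*b₃₃)-(b₁₁*a₁₃+b₁₂*a₂₃+b₁₃*a₃₃);
       (a₂₁*b₁₁+a₂₂*b₂₁+a₂₃*b₃₁)-(b₂₁*a₁₁+b₂₂*a₂₁+b₂₃*a₃₁),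
       (a₂₁*b₁₂+a₂₂*b₂₂+a₂₃*b₃₂)-(b₂₁*a₁₂+b₂₂*a₂₂+b₂₃*a₃₂),
       (a₂₁*b₁₃+a₂₂*b₂₃+a₂₃*b₃₃)-(b₂₁*a₁₃+b₂₂*a₂₃+b₂₃*a₃₃);
       (a₃₁*b₁₁+a₃₂*b₂₁+a₃₃*b₃₁)-(b₃₁*a₁₁+b₃₂*a₂₁+b₃₃*a₃₁),
       (a₃₁*b₁₂+a₃₂*b₂₂+a₃₃*b₃₂)-(b₃₁*a₁₂+b₃₂*a₂₂+b₃₃*a₃₂),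
       (a₃₁*b₁₃+a₃₂*b₂₃+a₃₃*b₃₃)-(b₃₁*a₁₃+b₃₂*a₂₃+b₃₃*a₃₃)] := by
  rw [Ring.lie_def, mul_fin_three, mul_fin_three, sub_fin_three']

private lemma oscH_eq : oscH = !![(1:ℝ)/3, 0, 0; 0, -2/3, 0; 0, 0, 1/3] := by
  rw [oscH, Matrix.smul_of]
  congr 1
  funext i j
  fin_cases i <;> fin_cases j <;> norm_num

/-- bracket of `x = s h + a z + b q + c p` with a generic strictly upper triangular matrix. -/
private lemma lie_upper (s a b c u v w : ℝ) :
    ⁅(!![s/3, b, a; 0, -(2*s)/3, c; 0, 0, s/3] : Matrix (Fin 3) (Fin 3) ℝ),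
      !![0,u,v; 0,0,w; 0,0,0]⁆ = !![0, u*s, w*b - u*c; 0, 0, -(w*s); 0, 0, 0] := by
  rw [lie_fin_three]
  ext i j
  fin_cases i <;> fin_cases j <;> simp [Matrix.vecHead, Matrix.vecTail] <;> ring

set_option maxHeartbeats 2000000 in
private lemma key (s a b c : ℝ) (hs : s = 1 ∨ s = -1) :
    IsOscEuler (s • oscH + (a • oscZ + (b • oscQ + c • oscP))) := by
  have hmem : s • oscH + (a • oscZ + (b • oscQ + c • oscP)) ∈ osc :=
    Submodule.add_mem _ (Submodule.smul_mem _ _ (Submodule.subset_span (by simp)))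
      (Submodule.add_mem _ (Submodule.smul_mem _ _ (Submodule.subset_span (by simp)))
        (Submodule.add_mem _ (Submodule.smul_mem _ _ (Submodule.subset_span (by simp)))
          (Submodule.smul_mem _ _ (Submodule.subset_span (by simp)))))
  have hxX : s • oscH + (a • oscZ + (b • oscQ + c • oscP)) =
      !![s/3, b, a; 0, -(2*s)/3, c; 0, 0, s/3] := by
    ext i j
    fin_cases i <;> fin_cases j <;>
      simp [oscH_eq, oscQ, oscP, oscZ, Matrix.vecHead, Matrix.vecTail] <;> ring
  rw [hxX] at hmem ⊢
  set X : Matrix (Fin 3) (Fin 3) ℝ := !![s/3, b, a; 0, -(2*s)/3, c; 0, 0, s/3] with hX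
  have hQ1 : ⁅X, oscQ⁆ = !![0, s, -c; 0, 0, 0; 0, 0, 0] := by
    rw [hX, oscQ, lie_fin_three]
    ext i j
    fin_cases i <;> fin_cases j <;> simp [Matrix.vecHead, Matrix.vecTail] <;> ring
  refine ⟨hmem, ?_, oscQ, Submodule.subset_span (by simp), ?_⟩
  · intro y hy
    induction hy using Submodule.span_induction with
    | mem y h =>
      have h4 : y = oscH ∨ y = oscQ ∨ y = oscP ∨ y = oscZ := by simpa using h
      rcases h4 with rfl | rfl | rfl | rfl
      · have h1 : ⁅X, oscH⁆ = !![0, -b, 0; 0, 0, c; 0, 0, 0] := by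
          rw [hX, oscH_eq, lie_fin_three]
          ext i j
          fin_cases i <;> fin_cases j <;> simp [Matrix.vecHead, Matrix.vecTail] <;> ring
        rw [h1, hX, lie_upper, lie_upper]
        ext i j
        fin_cases i <;> fin_cases j <;> rcases hs with rfl | rfl <;>
          simp [Matrix.vecHead, Matrix.vecTail] <;> first | rfl | ring | norm_num
      · rw [hQ1, hX, lie_upper, lie_upper]
        ext i j
        fin_cases i <;> fin_cases j <;> rcases hs with rfl | rfl <;>
          simp [Matrix.vecHead, Matrix.vecTail] <;> first | rfl | ring | norm_num
      · have h1 : ⁅X, oscP⁆ = !![0, 0, b; 0, 0, -s; 0, 0, 0] := by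
          rw [hX, oscP, lie_fin_three]
          ext i j
          fin_cases i <;> fin_cases j <;> simp [Matrix.vecHead, Matrix.vecTail] <;> ring
        rw [h1, hX, lie_upper, lie_upper]
        ext i j
        fin_cases i <;> fin_cases j <;> rcases hs with rfl | rfl <;>
          simp [Matrix.vecHead, Matrix.vecTail] <;> first | rfl | ring | norm_num
      · have h1 : ⁅X, oscZ⁆ = 0 := by
          rw [hX, oscZ, lie_fin_three]
          ext i j
          fin_cases i <;> fin_cases j <;> simp [Matrix.vecHead, Matrix.vecTail] <;> ring
        rw [h1]; simp only [Ring.lie_def, mul_zero, zero_mul, sub_zero]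
    | zero => simp only [Ring.lie_def, mul_zero, zero_mul, sub_zero]
    | add y z _ _ hy hz =>
      have ladd : ∀ A B C : Matrix (Fin 3) (Fin 3) ℝ, ⁅A, B + C⁆ = ⁅A, B⁆ + ⁅A, C⁆ := by
        intro A B C; simp only [Ring.lie_def]; noncomm_ring
      rw [ladd, ladd, ladd, hy, hz]
    | smul t y _ hy =>
      have lsm : ∀ (r : ℝ) (A B : Matrix (Fin 3) (Fin 3) ℝ), ⁅A, r • B⁆ = r • ⁅A, B⁆ := by
        intro r A B; simp only [Ring.lie_def, mul_smul_comm, smul_mul_assoc, smul_sub]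
      rw [lsm, lsm, lsm, hy]
  · rw [hQ1]
    intro hcon
    have h01 := congrFun (congrFun hcon 0) 1
    simp at h01
    rcases hs with rfl | rfl <;> norm_num at h01

/-- Every element of the form `±h + w` with `w ∈ heis(ℝ²)` is an Euler
element of the split oscillator Lie algebra `𝔤 = heis(ℝ²) ⋊ ℝh`. -/
theorem stmt5 :
    ∀ w ∈ oscHeis, IsOscEuler (oscH + w) ∧ IsOscEuler (-oscH + w) := by
  intro w hw
  rw [oscHeis, Submodule.mem_span_insert] at hw
  obtain ⟨a, w', hw', rfl⟩ := hw
  rw [Submodule.mem_span_insert] at hw'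
  obtain ⟨b, w'', hw'', rfl⟩ := hw'
  rw [Submodule.mem_span_singleton] at hw''
  obtain ⟨c, rfl⟩ := hw''
  constructor
  · have := key 1 a b c (Or.inl rfl)
    rwa [one_smul] at this
  · have := key (-1) a b c (Or.inr rfl)
    rwa [neg_one_smul] at this
end
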